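/- Combining the previous two facts: if B : ℝ^n → ℝ is C¹ with B ≥ 0 on ℝ^n \ X_u, B < 0 on X_u, and ⟨∇B(x), f(x)⟩ + α(B(x)) ≥ 0 for all x for some extended class-K function α, then every solution of ẋ = f(x) with B(x(0)) ≥ 0 satisfies x(t) ∉ X_u for all t ≥ 0. -/

import Mathlib

open scoped RealInnerProductSpace

open Set

/- Along a solution, `g = B ∘ x` satisfies `g' ≥ -α(g)`, and `-α(g) > 0` wherever `g < 0`.
So `g` can never cross below a level `-ε < 0`, since it would have to decrease through it.
Letting `ε → 0` gives `B(x t) ≥ 0` for all `t ≥ 0`, which excludes the unsafe set. -/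

theorem HasGradientAt.comp_hasDerivAt {E : Type*} [NormedAddCommGroup E] [InnerProductSpace ℝ E]
    [CompleteSpace E] {B : E → ℝ} {x : ℝ → E} {b v : E} {t : ℝ}
    (hB : HasGradientAt B b (x t)) (hx : HasDerivAt x v t) :
    HasDerivAt (B ∘ x) ⟪b, v⟫ t :=
  hB.hasFDerivAt.comp_hasDerivAt t hx

theorem image_nonneg_of_deriv_right_pos_of_neg {g g' : ℝ → ℝ} {a b : ℝ}
    (hg : ContinuousOn g (Icc a b)) (hg' : ∀ t ∈ Ico a b, HasDerivWithinAt g (g' t) (Ici t) t)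
    (hpos : ∀ t ∈ Ico a b, g t < 0 → 0 < g' t) (ha : 0 ≤ g a) :
    ∀ ⦃t⦄, t ∈ Icc a b → 0 ≤ g t := by
  intro t ht
  refine le_of_forall_pos_le_add fun ε hε => ?_
  -- At level `0` itself only `g' ≥ 0` would be available, too weak for the strict fencing lemma.
  have hbelow : -g t ≤ ε :=
    image_le_of_deriv_right_lt_deriv_boundary' hg.neg (fun s hs => (hg' s hs).neg)
      (by rw [Pi.neg_apply]; linarith) continuousOn_const (fun _ _ => hasDerivWithinAt_const _ _ ε)
      (fun s hs hgs => by rw [Pi.neg_apply] at hgs; linarith [hpos s hs (by linarith)]) ht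
  linarith

theorem barrier_certificate_safety_general
    (n : ℕ) (f : EuclideanSpace ℝ (Fin n) → EuclideanSpace ℝ (Fin n))
    (B : EuclideanSpace ℝ (Fin n) → ℝ)
    (Xu : Set (EuclideanSpace ℝ (Fin n)))
    (x : ℝ → EuclideanSpace ℝ (Fin n))
    (α : ℝ → ℝ)
    (hB : ContDiff ℝ 1 B)
    (hin : ∀ y ∈ Xu, B y < 0)
    (hα_mono : StrictMono α) (hα_zero : α 0 = 0)
    (hineq : ∀ y, ⟪gradient B y, f y⟫ + α (B y) ≥ 0)
    (hsol : ∀ t ∈ Set.Ici (0 : ℝ), HasDerivAt x (f (x t)) t)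
    (h0 : B (x 0) ≥ 0) :
    ∀ t ≥ (0 : ℝ), x t ∉ Xu := by
  have hderiv : ∀ t ≥ (0 : ℝ), HasDerivAt (B ∘ x) ⟪gradient B (x t), f (x t)⟫ t :=
    fun t ht => (hB.differentiable one_ne_zero (x t)).hasGradientAt.comp_hasDerivAt (hsol t ht)
  have hincreasing : ∀ t ≥ (0 : ℝ), B (x t) < 0 → 0 < ⟪gradient B (x t), f (x t)⟫ := by
    intro t _ hneg
    have : α (B (x t)) < 0 := hα_zero ▸ hα_mono hneg
    linarith [hineq (x t)]
  intro s hs hmem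
  have hnonneg : 0 ≤ B (x s) :=
    image_nonneg_of_deriv_right_pos_of_neg (g := B ∘ x)
      (fun t ht => (hderiv t ht.1).continuousAt.continuousWithinAt)
      (fun t ht => (hderiv t ht.1).hasDerivWithinAt) (fun t ht => hincreasing t ht.1) h0
      ⟨hs, le_rfl⟩
  exact (hin _ hmem).not_ge hnonneg

/-- Full barrier-certificate safety theorem: a C¹ barrier function B that is
nonnegative outside the unsafe set, negative on the unsafe set, and satisfies
⟨∇B, f⟩ + α(B) ≥ 0 for an extended class-K function α, guarantees that every
solution of ẋ = f(x) starting in {B ≥ 0} never enters the unsafe set. -/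
theorem barrier_certificate_safety
    (n : ℕ) (f : EuclideanSpace ℝ (Fin n) → EuclideanSpace ℝ (Fin n))
    (B : EuclideanSpace ℝ (Fin n) → ℝ)
    (Xu : Set (EuclideanSpace ℝ (Fin n)))
    (x : ℝ → EuclideanSpace ℝ (Fin n))
    (α : ℝ → ℝ)
    (hB : ContDiff ℝ 1 B)
    (hf : LocallyLipschitz f) (hf0 : f 0 = 0)
    (hout : ∀ y ∉ Xu, B y ≥ 0)
    (hin : ∀ y ∈ Xu, B y < 0)
    (hα_cont : Continuous α) (hα_mono : StrictMono α) (hα_zero : α 0 = 0)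
    (hineq : ∀ y, ⟪gradient B y, f y⟫ + α (B y) ≥ 0)
    (hsol : ∀ t ∈ Set.Ici (0 : ℝ), HasDerivAt x (f (x t)) t)
    (h0 : B (x 0) ≥ 0) :
    ∀ t ≥ (0 : ℝ), x t ∉ Xu :=
  barrier_certificate_safety_general n f B Xu x α hB hin hα_mono hα_zero hineq hsol h0
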